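/- Let f, g be regulated on (a,b), α strictly increasing, with D_α f and D_α g existing everywhere on (a,b), and suppose D_α g is everywhere positive or everywhere negative on (a,b). Then for any a < s < t < b there exist u, v ∈ (s,t) with (D_α f)(u)/(D_α g)(u) ≤ (f^-(t) - f^+(s))/(g^-(t) - g^+(s)) ≤ (D_α f)(v)/(D_α g)(v). -/

import Mathlib

open Filter Topology Function Set MeasureTheory

/-- `x` lies in the interval `(a, b)` with extended-real endpoints. -/
def MemI (a b : EReal) (x : ℝ) : Prop := a < (x : EReal) ∧ (x : EReal) < b

/-- `f` is regulated on `(a, b)`: both one-sided limits exist (as real numbers)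
at every point of `(a, b)`. -/
def RegulatedOn' (f : ℝ → ℝ) (a b : EReal) : Prop :=
  ∀ x : ℝ, MemI a b x →
    (∃ L : ℝ, Tendsto f (𝓝[<] x) (𝓝 L)) ∧ ∃ R : ℝ, Tendsto f (𝓝[>] x) (𝓝 R)

/-- The symmetric `α`-derivative of `f` at `x` equals `A`:
`(D_α f)(x) = lim_{h↓0} (f⁻(x+h) - f⁺(x-h)) / (α⁻(x+h) - α⁺(x-h))`. -/
def HasDerivAlpha (f α : ℝ → ℝ) (x A : ℝ) : Prop :=
  Tendsto (fun h : ℝ =>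
      (leftLim f (x + h) - rightLim f (x - h)) /
        (leftLim α (x + h) - rightLim α (x - h)))
    (𝓝[>] (0 : ℝ)) (𝓝 A)

/-- The filter of real numbers approaching `b : EReal` from the left (`x ↑ b`). -/
noncomputable def leftFilter (b : EReal) : Filter ℝ := comap (fun x : ℝ => (x : EReal)) (𝓝[<] b)

/-- The filter of real numbers approaching `a : EReal` from the right (`x ↓ a`). -/
noncomputable def rightFilter (a : EReal) : Filter ℝ := comap (fun x : ℝ => (x : EReal)) (𝓝[>] a)

namespace S13



lemma tendsto_leftLim_of_ex {f : ℝ → ℝ} {x : ℝ} (h : ∃ L : ℝ, Tendsto f (𝓝[<] x) (𝓝 L)) :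
    Tendsto f (𝓝[<] x) (𝓝 (leftLim f x)) := by
  obtain ⟨L, hL⟩ := h
  rwa [leftLim_eq_of_tendsto hL]

lemma tendsto_rightLim_of_ex {f : ℝ → ℝ} {x : ℝ} (h : ∃ L : ℝ, Tendsto f (𝓝[>] x) (𝓝 L)) :
    Tendsto f (𝓝[>] x) (𝓝 (rightLim f x)) := by
  obtain ⟨L, hL⟩ := h
  rwa [rightLim_eq_of_tendsto hL]

lemma tendsto_add_pos (m : ℝ) : Tendsto (fun δ : ℝ => m + δ) (𝓝[>] (0:ℝ)) (𝓝[>] m) := by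
  rw [tendsto_nhdsWithin_iff]
  constructor
  · have h : Tendsto (fun δ : ℝ => m + δ) (𝓝 0) (𝓝 (m + 0)) :=
      (continuous_add_left m).tendsto 0
    simpa using h.mono_left nhdsWithin_le_nhds
  · exact eventually_mem_nhdsWithin.mono (fun δ hδ => by simpa using hδ)

lemma tendsto_sub_pos (m : ℝ) : Tendsto (fun δ : ℝ => m - δ) (𝓝[>] (0:ℝ)) (𝓝[<] m) := by
  rw [tendsto_nhdsWithin_iff]
  constructor
  · have h : Tendsto (fun δ : ℝ => m - δ) (𝓝 0) (𝓝 (m - 0)) :=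
      (continuous_const.sub continuous_id).tendsto 0
    simpa using h.mono_left nhdsWithin_le_nhds
  · refine eventually_mem_nhdsWithin.mono (fun δ hδ => ?_)
    have : (0:ℝ) < δ := hδ
    simp only [mem_Iio]; linarith

lemma tendsto_of_nested {F G : ℝ → ℝ} {L : ℝ} {l : Filter ℝ} {κ : ℝ → Filter ℝ}
    (hκ : ∀ᶠ z in l, (κ z).NeBot ∧ Tendsto F (κ z) (𝓝 (G z)))
    (hsub : ∀ S ∈ l, ∀ᶠ z in l, ∀ᶠ u in κ z, u ∈ S)
    (hF : Tendsto F l (𝓝 L)) :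
    Tendsto G l (𝓝 L) := by
  rw [Metric.tendsto_nhds]
  intro ε hε
  have hS : {u : ℝ | dist (F u) L < ε/2} ∈ l := by
    have := hF (Metric.ball_mem_nhds L (half_pos hε))
    exact this
  filter_upwards [hκ, hsub _ hS] with z hz hz2
  obtain ⟨hne, hten⟩ := hz
  have hd : Tendsto (fun u => dist (F u) L) (κ z) (𝓝 (dist (G z) L)) :=
    hten.dist tendsto_const_nhds
  have hle : dist (G z) L ≤ ε/2 :=
    le_of_tendsto hd (hz2.mono fun u hu => le_of_lt hu)
  calc dist (G z) L ≤ ε/2 := hle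
  _ < ε := half_lt_self hε

/-- left limits, approaching `c` from the right, tend to the right limit at `c`. -/
lemma leftLim_tendsto_right {h : ℝ → ℝ} {c t L : ℝ} (hct : c < t)
    (reg : ∀ z ∈ Ioo c t, Tendsto h (𝓝[<] z) (𝓝 (leftLim h z)))
    (hR : Tendsto h (𝓝[>] c) (𝓝 L)) :
    Tendsto (fun z => leftLim h z) (𝓝[>] c) (𝓝 L) := by
  refine tendsto_of_nested (κ := fun z => 𝓝[<] z) ?_ ?_ hR
  · filter_upwards [Ioo_mem_nhdsGT hct] with z hz
    exact ⟨inferInstance, reg z hz⟩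
  · intro S hS
    obtain ⟨w, hw, hsub⟩ := mem_nhdsGT_iff_exists_Ioo_subset.1 hS
    filter_upwards [Ioo_mem_nhdsGT hw] with z hz
    filter_upwards [Ioo_mem_nhdsLT hz.1] with u hu
    exact hsub ⟨hu.1, hu.2.trans hz.2⟩

lemma rightLim_tendsto_right {h : ℝ → ℝ} {c t L : ℝ} (hct : c < t)
    (reg : ∀ z ∈ Ioo c t, Tendsto h (𝓝[>] z) (𝓝 (rightLim h z)))
    (hR : Tendsto h (𝓝[>] c) (𝓝 L)) :
    Tendsto (fun z => rightLim h z) (𝓝[>] c) (𝓝 L) := by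
  refine tendsto_of_nested (κ := fun z => 𝓝[>] z) ?_ ?_ hR
  · filter_upwards [Ioo_mem_nhdsGT hct] with z hz
    exact ⟨inferInstance, reg z hz⟩
  · intro S hS
    obtain ⟨w, hw, hsub⟩ := mem_nhdsGT_iff_exists_Ioo_subset.1 hS
    filter_upwards [Ioo_mem_nhdsGT hw] with z hz
    filter_upwards [Ioo_mem_nhdsGT hz.2] with u hu
    exact hsub ⟨hz.1.trans hu.1, hu.2⟩

lemma leftLim_tendsto_left {h : ℝ → ℝ} {c s L : ℝ} (hsc : s < c)
    (reg : ∀ z ∈ Ioo s c, Tendsto h (𝓝[<] z) (𝓝 (leftLim h z)))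
    (hL : Tendsto h (𝓝[<] c) (𝓝 L)) :
    Tendsto (fun z => leftLim h z) (𝓝[<] c) (𝓝 L) := by
  refine tendsto_of_nested (κ := fun z => 𝓝[<] z) ?_ ?_ hL
  · filter_upwards [Ioo_mem_nhdsLT hsc] with z hz
    exact ⟨inferInstance, reg z hz⟩
  · intro S hS
    obtain ⟨w, hw, hsub⟩ := mem_nhdsLT_iff_exists_Ioo_subset.1 hS
    filter_upwards [Ioo_mem_nhdsLT hw] with z hz
    filter_upwards [Ioo_mem_nhdsLT hz.1] with u hu
    exact hsub ⟨hu.1, hu.2.trans hz.2⟩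

lemma rightLim_tendsto_left {h : ℝ → ℝ} {c s L : ℝ} (hsc : s < c)
    (reg : ∀ z ∈ Ioo s c, Tendsto h (𝓝[>] z) (𝓝 (rightLim h z)))
    (hL : Tendsto h (𝓝[<] c) (𝓝 L)) :
    Tendsto (fun z => rightLim h z) (𝓝[<] c) (𝓝 L) := by
  refine tendsto_of_nested (κ := fun z => 𝓝[>] z) ?_ ?_ hL
  · filter_upwards [Ioo_mem_nhdsLT hsc] with z hz
    exact ⟨inferInstance, reg z hz⟩
  · intro S hS
    obtain ⟨w, hw, hsub⟩ := mem_nhdsLT_iff_exists_Ioo_subset.1 hS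
    filter_upwards [Ioo_mem_nhdsLT hw] with z hz
    filter_upwards [Ioo_mem_nhdsGT hz.2] with u hu
    exact hsub ⟨hz.1.trans hu.1, hu.2⟩



structure RegOn (h : ℝ → ℝ) (s t : ℝ) : Prop where
  left : ∀ x ∈ Ioc s t, Tendsto h (𝓝[<] x) (𝓝 (leftLim h x))
  right : ∀ x ∈ Ico s t, Tendsto h (𝓝[>] x) (𝓝 (rightLim h x))

lemma RegOn.mono {h : ℝ → ℝ} {s t s' t' : ℝ} (H : RegOn h s t) (hs : s ≤ s') (ht : t' ≤ t) :
    RegOn h s' t' :=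
  ⟨fun x hx => H.left x ⟨lt_of_le_of_lt hs hx.1, hx.2.trans ht⟩,
   fun x hx => H.right x ⟨hs.trans hx.1, lt_of_lt_of_le hx.2 ht⟩⟩

section alpha
variable {α : ℝ → ℝ} {s t : ℝ}

lemma rightLim_le (hαreg : RegOn α s t) (hαs : StrictMonoOn α (Icc s t))
    {x y : ℝ} (hx : x ∈ Ico s t) (hy : y ∈ Icc s t) (hxy : x < y) :
    rightLim α x ≤ α y := by
  refine le_of_tendsto (hαreg.right x hx) ?_
  filter_upwards [Ioo_mem_nhdsGT hxy] with u hu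
  exact hαs.monotoneOn ⟨hx.1.trans hu.1.le, hu.2.le.trans hy.2⟩ hy hu.2.le

lemma le_leftLim (hαreg : RegOn α s t) (hαs : StrictMonoOn α (Icc s t))
    {x y : ℝ} (hx : x ∈ Icc s t) (hy : y ∈ Ioc s t) (hxy : x < y) :
    α x ≤ leftLim α y := by
  refine ge_of_tendsto (hαreg.left y hy) ?_
  filter_upwards [Ioo_mem_nhdsLT hxy] with u hu
  exact hαs.monotoneOn hx ⟨hx.1.trans hu.1.le, hu.2.le.trans hy.2⟩ hu.1.le

lemma rightLim_lt_leftLim (hαreg : RegOn α s t) (hαs : StrictMonoOn α (Icc s t))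
    {x y : ℝ} (hx : x ∈ Ico s t) (hy : y ∈ Ioc s t) (hxy : x < y) :
    rightLim α x < leftLim α y := by
  set w₁ := x + (y - x)/3 with hw₁
  set w₂ := x + 2*(y - x)/3 with hw₂
  have h1 : x < w₁ := by simp only [hw₁]; linarith
  have h2 : w₁ < w₂ := by simp only [hw₁, hw₂]; linarith
  have h3 : w₂ < y := by simp only [hw₂]; linarith
  have hw₁m : w₁ ∈ Icc s t := ⟨hx.1.trans h1.le, ((h2.trans h3).le).trans hy.2⟩
  have hw₂m : w₂ ∈ Icc s t := ⟨hx.1.trans (h1.trans h2).le, (h3.le.trans hy.2)⟩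
  calc rightLim α x ≤ α w₁ := rightLim_le hαreg hαs hx hw₁m h1
  _ < α w₂ := hαs hw₁m hw₂m h2
  _ ≤ leftLim α y := le_leftLim hαreg hαs hw₂m hy h3

lemma leftLim_le_self (hαreg : RegOn α s t) (hαs : StrictMonoOn α (Icc s t))
    {x : ℝ} (hx : x ∈ Ioc s t) : leftLim α x ≤ α x := by
  refine le_of_tendsto (hαreg.left x hx) ?_
  filter_upwards [Ioo_mem_nhdsLT hx.1] with u hu
  exact hαs.monotoneOn ⟨hu.1.le, hu.2.le.trans hx.2⟩ ⟨hx.1.le, hx.2⟩ hu.2.le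

lemma self_le_rightLim (hαreg : RegOn α s t) (hαs : StrictMonoOn α (Icc s t))
    {x : ℝ} (hx : x ∈ Ico s t) : α x ≤ rightLim α x := by
  refine ge_of_tendsto (hαreg.right x hx) ?_
  filter_upwards [Ioo_mem_nhdsGT hx.2] with u hu
  exact hαs.monotoneOn ⟨hx.1, hx.2.le⟩ ⟨hx.1.trans hu.1.le, hu.2.le⟩ hu.1.le

lemma den_pos_ev (hαreg : RegOn α s t) (hαs : StrictMonoOn α (Icc s t))
    {m : ℝ} (hm : m ∈ Ioo s t) :
    ∀ᶠ δ in 𝓝[>] (0:ℝ), (m - δ ∈ Ioo s t ∧ m + δ ∈ Ioo s t) ∧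
      0 < leftLim α (m + δ) - rightLim α (m - δ) := by
  have hmin : (0:ℝ) < min (m - s) (t - m) := by
    simp only [lt_min_iff]; constructor <;> [linarith [hm.1]; linarith [hm.2]]
  filter_upwards [Ioo_mem_nhdsGT hmin] with δ hδ
  have hδ1 : δ < m - s := lt_of_lt_of_le hδ.2 (min_le_left _ _)
  have hδ2 : δ < t - m := lt_of_lt_of_le hδ.2 (min_le_right _ _)
  have hδ0 : (0:ℝ) < δ := hδ.1
  have hmem1 : m - δ ∈ Ioo s t := ⟨by linarith, by linarith⟩
  have hmem2 : m + δ ∈ Ioo s t := ⟨by linarith, by linarith⟩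
  refine ⟨⟨hmem1, hmem2⟩, ?_⟩
  have := rightLim_lt_leftLim hαreg hαs (x := m - δ) (y := m + δ)
    ⟨hmem1.1.le, hmem1.2⟩ ⟨hmem2.1, hmem2.2.le⟩ (by linarith)
  linarith

end alpha

section ptwise
variable {h α : ℝ → ℝ} {s t : ℝ}

/-- The symmetric derivative notion, but with explicit regulated data: numerator and
denominator limits. -/
lemma num_den_tendsto (hst : s < t) (hreg : RegOn h s t) {m : ℝ} (hm : m ∈ Ioo s t) :
    Tendsto (fun δ : ℝ => leftLim h (m + δ) - rightLim h (m - δ)) (𝓝[>] (0:ℝ))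
      (𝓝 (rightLim h m - leftLim h m)) := by
  have h1 : Tendsto (fun z => leftLim h z) (𝓝[>] m) (𝓝 (rightLim h m)) :=
    leftLim_tendsto_right hm.2
      (fun z hz => hreg.left z ⟨hm.1.trans hz.1, hz.2.le⟩)
      (hreg.right m ⟨hm.1.le, hm.2⟩)
  have h2 : Tendsto (fun z => rightLim h z) (𝓝[<] m) (𝓝 (leftLim h m)) :=
    rightLim_tendsto_left hm.1
      (fun z hz => hreg.right z ⟨hz.1.le, hz.2.trans hm.2⟩)
      (hreg.left m ⟨hm.1, hm.2.le⟩)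
  exact (h1.comp (tendsto_add_pos m)).sub (h2.comp (tendsto_sub_pos m))

lemma ptwise (hst : s < t) (hreg : RegOn h s t) (hαreg : RegOn α s t)
    (hαs : StrictMonoOn α (Icc s t)) {m D : ℝ} (hm : m ∈ Ioo s t)
    (hD : HasDerivAlpha h α m D) (hD0 : 0 ≤ D) :
    leftLim h m ≤ rightLim h m := by
  have hnum := num_den_tendsto hst hreg hm
  have hden := num_den_tendsto hst hαreg hm
  have hpos := den_pos_ev hαreg hαs hm
  set J := rightLim α m - leftLim α m with hJ
  have hnum' : Tendsto (fun δ : ℝ => leftLim h (m + δ) - rightLim h (m - δ)) (𝓝[>] (0:ℝ))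
      (𝓝 (D * J)) := by
    refine (hD.mul hden).congr' ?_
    filter_upwards [hpos] with δ hδ
    exact div_mul_cancel₀ _ (ne_of_gt hδ.2)
  have hkey : rightLim h m - leftLim h m = D * J := tendsto_nhds_unique hnum hnum'
  have hJ0 : 0 ≤ J := by
    refine ge_of_tendsto hden ?_
    filter_upwards [hpos] with δ hδ
    exact hδ.2.le
  nlinarith [mul_nonneg hD0 hJ0]

end ptwise

section core
variable {h α : ℝ → ℝ} {s t : ℝ}

lemma core (hst : s < t) (hreg : RegOn h s t) (hαreg : RegOn α s t)
    (hαs : StrictMonoOn α (Icc s t))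
    (hd : ∀ x ∈ Ioo s t, ∃ D : ℝ, 0 ≤ D ∧ HasDerivAlpha h α x D) :
    rightLim h s ≤ leftLim h t := by
  have hK : 0 < leftLim α t - rightLim α s := by
    have := rightLim_lt_leftLim hαreg hαs (x := s) (y := t)
      ⟨le_refl _, hst⟩ ⟨hst, le_refl _⟩ hst
    linarith
  have main : ∀ ε > (0:ℝ), ∀ η > (0:ℝ),
      rightLim h s - η - ε * (leftLim α t - rightLim α s) ≤ leftLim h t := by
    intro ε hε η hη
    set B : Set ℝ := {y | y ∈ Icc s t ∧ ∀ z, s < z → z ≤ y →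
      rightLim h s - η - ε * (leftLim α z - rightLim α s) ≤ leftLim h z} with hB
    have hsB : s ∈ B :=
      ⟨⟨le_refl _, hst.le⟩, fun z hz1 hz2 => absurd (lt_of_lt_of_le hz1 hz2) (lt_irrefl _)⟩
    have hBne : B.Nonempty := ⟨s, hsB⟩
    have hbdd : BddAbove B := ⟨t, fun y hy => hy.1.2⟩
    set c := sSup B with hc
    have hsc : s ≤ c := le_csSup hbdd hsB
    have hct : c ≤ t := csSup_le hBne (fun y hy => hy.1.2)
    have hcB : ∀ z, s < z → z < c →
        rightLim h s - η - ε * (leftLim α z - rightLim α s) ≤ leftLim h z := by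
      intro z hz1 hz2
      obtain ⟨y, hyB, hzy⟩ := exists_lt_of_lt_csSup hBne hz2
      exact hyB.2 z hz1 hzy.le
    have hcmem : c ∈ B := by
      refine ⟨⟨hsc, hct⟩, ?_⟩
      intro z hz1 hz2
      rcases lt_or_eq_of_le hz2 with hlt | heq
      · exact hcB z hz1 hlt
      · rw [heq]
        have hzc : s < c := heq ▸ hz1
        have l1 : Tendsto (fun w => leftLim h w) (𝓝[<] c) (𝓝 (leftLim h c)) :=
          leftLim_tendsto_left hzc
            (fun w hw => hreg.left w ⟨hw.1, hw.2.le.trans hct⟩)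
            (hreg.left c ⟨hzc, hct⟩)
        have l2 : Tendsto (fun w => leftLim α w) (𝓝[<] c) (𝓝 (leftLim α c)) :=
          leftLim_tendsto_left hzc
            (fun w hw => hαreg.left w ⟨hw.1, hw.2.le.trans hct⟩)
            (hαreg.left c ⟨hzc, hct⟩)
        refine le_of_tendsto_of_tendsto
          (tendsto_const_nhds.sub ((l2.sub tendsto_const_nhds).const_mul ε)) l1 ?_
        filter_upwards [Ioo_mem_nhdsLT hzc] with w hw
        exact hcB w hw.1 hw.2
    rcases eq_or_lt_of_le hct with hceq | hclt
    · have := hcmem.2 t hst hceq.ge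
      linarith
    · exfalso
      rcases eq_or_lt_of_le hsc with hseq | hslt
      · -- c = s
        have l1 : Tendsto (fun z => leftLim h z) (𝓝[>] s) (𝓝 (rightLim h s)) :=
          leftLim_tendsto_right hst (fun z hz => hreg.left z ⟨hz.1, hz.2.le⟩)
            (hreg.right s ⟨le_refl _, hst⟩)
        have ev1 : ∀ᶠ z in 𝓝[>] s, rightLim h s - η < leftLim h z :=
          (tendsto_order.1 l1).1 _ (by linarith)
        have ev2 : ∀ᶠ z in 𝓝[>] s, z ∈ Ioo s t := Ioo_mem_nhdsGT hst
        obtain ⟨w, hw, hsub⟩ := mem_nhdsGT_iff_exists_Ioo_subset.1 (ev1.and ev2)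
        obtain ⟨y, hy⟩ : ∃ y : ℝ, y = min ((s + w)/2) ((s + t)/2) := ⟨_, rfl⟩
        have hsy : s < y := by
          have hw' : s < w := hw
          rw [hy, lt_min_iff]; constructor <;> linarith
        have hyw : y < w := by
          have hw' : s < w := hw
          calc y ≤ (s + w)/2 := hy ▸ min_le_left _ _
          _ < w := by linarith
        have hyt : y < t := by
          calc y ≤ (s + t)/2 := hy ▸ min_le_right _ _
          _ < t := by linarith
        have hyB : y ∈ B := by
          refine ⟨⟨hsy.le, hyt.le⟩, ?_⟩
          intro z hz1 hz2
          have hzw : z ∈ Ioo s w := ⟨hz1, lt_of_le_of_lt hz2 hyw⟩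
          obtain ⟨hlt, hmem⟩ := hsub hzw
          have halpha : 0 < leftLim α z - rightLim α s := by
            have := rightLim_lt_leftLim hαreg hαs (x := s) (y := z)
              ⟨le_refl _, hst⟩ ⟨hmem.1, hmem.2.le⟩ hmem.1
            linarith
          nlinarith
        have : y ≤ c := le_csSup hbdd hyB
        rw [← hseq] at this
        linarith
      · -- s < c < t
        obtain ⟨D, hD0, hDer⟩ := hd c ⟨hslt, hclt⟩
        have ev1 : ∀ᶠ δ in 𝓝[>] (0:ℝ), -ε <
            (leftLim h (c + δ) - rightLim h (c - δ)) /
              (leftLim α (c + δ) - rightLim α (c - δ)) :=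
          (tendsto_order.1 hDer).1 _ (by linarith)
        have ev2 := den_pos_ev hαreg hαs (m := c) ⟨hslt, hclt⟩
        obtain ⟨δ₀, hδ₀, hsub⟩ := mem_nhdsGT_iff_exists_Ioo_subset.1 (ev1.and ev2)
        have hδ₀' : (0:ℝ) < δ₀ := hδ₀
        have key : ∀ z, c < z → z < c + δ₀ →
            rightLim h s - η - ε * (leftLim α z - rightLim α s) ≤ leftLim h z := by
          intro z hz1 hz2
          obtain ⟨hq, ⟨⟨hm1, hm2⟩, hden⟩⟩ := hsub (show z - c ∈ Ioo (0:ℝ) δ₀ by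
            constructor <;> [linarith; linarith])
          rw [show c + (z - c) = z by ring] at hq hm2 hden
          set w := c - (z - c) with hwdef
          -- hm1 : w ∈ Ioo s t
          have hnum : -ε * (leftLim α z - rightLim α w) <
              leftLim h z - rightLim h w := (lt_div_iff₀ hden).1 hq
          obtain ⟨D', hD'0, hDer'⟩ := hd w hm1
          have p1 : leftLim h w ≤ rightLim h w :=
            ptwise hst hreg hαreg hαs hm1 hDer' hD'0
          have p2 : rightLim h s - η - ε * (leftLim α w - rightLim α s) ≤ leftLim h w :=
            hcmem.2 w hm1.1 (by simp only [hwdef]; linarith)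
          have p3 : leftLim α w ≤ rightLim α w :=
            (leftLim_le_self hαreg hαs ⟨hm1.1, hm1.2.le⟩).trans
              (self_le_rightLim hαreg hαs ⟨hm1.1.le, hm1.2⟩)
          have e1 : ε * (leftLim α z - rightLim α s) =
              ε * (leftLim α w - rightLim α s) + ε * (leftLim α z - rightLim α w)
                + ε * (rightLim α w - leftLim α w) := by ring
          have e2 : 0 ≤ ε * (rightLim α w - leftLim α w) :=
            mul_nonneg hε.le (by linarith)
          have e3 : -ε * (leftLim α z - rightLim α w) =
              -(ε * (leftLim α z - rightLim α w)) := by ring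
          linarith
        have hyt : c + δ₀/2 < t := by
          have := (hsub (show δ₀/2 ∈ Ioo (0:ℝ) δ₀ by constructor <;> linarith)).2.1.2
          exact this.2
        have hyB : c + δ₀/2 ∈ B := by
          refine ⟨⟨by linarith, hyt.le⟩, ?_⟩
          intro z hz1 hz2
          rcases le_or_gt z c with hzc | hzc
          · exact hcmem.2 z hz1 hzc
          · exact key z hzc (by linarith)
        have : c + δ₀/2 ≤ c := le_csSup hbdd hyB
        linarith
  refine le_of_forall_pos_le_add ?_
  intro θ hθ
  have := main ((θ/2) / (leftLim α t - rightLim α s)) (div_pos (by linarith) hK)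
    (θ/2) (by linarith)
  rw [div_mul_cancel₀ _ hK.ne'] at this
  linarith

end core

section strict
variable {h α : ℝ → ℝ} {s t : ℝ}

lemma core_strict (hst : s < t) (hreg : RegOn h s t) (hαreg : RegOn α s t)
    (hαs : StrictMonoOn α (Icc s t))
    (hd : ∀ x ∈ Ioo s t, ∃ D : ℝ, 0 < D ∧ HasDerivAlpha h α x D) :
    rightLim h s < leftLim h t := by
  obtain ⟨D, hD0, hDer⟩ := hd ((s + t)/2) ⟨by linarith, by linarith⟩
  have ev1 : ∀ᶠ δ in 𝓝[>] (0:ℝ), D/2 <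
      (leftLim h ((s+t)/2 + δ) - rightLim h ((s+t)/2 - δ)) /
        (leftLim α ((s+t)/2 + δ) - rightLim α ((s+t)/2 - δ)) :=
    (tendsto_order.1 hDer).1 _ (by linarith)
  have ev2 := den_pos_ev hαreg hαs (m := (s+t)/2) ⟨by linarith, by linarith⟩
  obtain ⟨δ, ⟨hq, ⟨hm1, hm2⟩, hden⟩, hδmem⟩ := ((ev1.and ev2).and eventually_mem_nhdsWithin).exists
  have hδ0 : (0:ℝ) < δ := hδmem
  have hnum : 0 < leftLim h ((s+t)/2 + δ) - rightLim h ((s+t)/2 - δ) := by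
    have h1 : 0 < (leftLim h ((s+t)/2 + δ) - rightLim h ((s+t)/2 - δ)) /
        (leftLim α ((s+t)/2 + δ) - rightLim α ((s+t)/2 - δ)) := lt_trans (by linarith) hq
    nlinarith [div_mul_cancel₀ (leftLim h ((s+t)/2 + δ) - rightLim h ((s+t)/2 - δ))
      (ne_of_gt hden)]
  -- chain
  have step1 : rightLim h s ≤ leftLim h ((s+t)/2 - δ) := by
    refine core (s := s) (t := (s+t)/2 - δ) hm1.1 (hreg.mono le_rfl (by linarith [hm1.2]))
      (hαreg.mono le_rfl (by linarith [hm1.2])) (hαs.mono (Icc_subset_Icc le_rfl (by linarith [hm1.2]))) ?_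
    intro x hx
    obtain ⟨D', hD', hDer'⟩ := hd x ⟨hx.1, by linarith [hx.2, hm1.2]⟩
    exact ⟨D', hD'.le, hDer'⟩
  have step2 : leftLim h ((s+t)/2 - δ) ≤ rightLim h ((s+t)/2 - δ) := by
    obtain ⟨D', hD', hDer'⟩ := hd _ hm1
    exact ptwise hst hreg hαreg hαs hm1 hDer' hD'.le
  have step4 : leftLim h ((s+t)/2 + δ) ≤ rightLim h ((s+t)/2 + δ) := by
    obtain ⟨D', hD', hDer'⟩ := hd _ hm2
    exact ptwise hst hreg hαreg hαs hm2 hDer' hD'.le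
  have step5 : rightLim h ((s+t)/2 + δ) ≤ leftLim h t := by
    refine core (s := (s+t)/2 + δ) (t := t) hm2.2 (hreg.mono (by linarith [hm2.1]) le_rfl)
      (hαreg.mono (by linarith [hm2.1]) le_rfl)
      (hαs.mono (Icc_subset_Icc (by linarith [hm2.1]) le_rfl)) ?_
    intro x hx
    obtain ⟨D', hD', hDer'⟩ := hd x ⟨by linarith [hx.1, hm2.1], hx.2⟩
    exact ⟨D', hD'.le, hDer'⟩
  linarith

lemma leftLim_neg' {f : ℝ → ℝ} {x : ℝ} (hx : Tendsto f (𝓝[<] x) (𝓝 (leftLim f x))) :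
    leftLim (fun y => -f y) x = -leftLim f x :=
  leftLim_eq_of_tendsto hx.neg

lemma rightLim_neg' {f : ℝ → ℝ} {x : ℝ} (hx : Tendsto f (𝓝[>] x) (𝓝 (rightLim f x))) :
    rightLim (fun y => -f y) x = -rightLim f x :=
  rightLim_eq_of_tendsto hx.neg

lemma RegOn.neg {s t : ℝ} (hreg : RegOn h s t) : RegOn (fun y => -h y) s t := by
  constructor
  · intro x hx
    rw [leftLim_neg' (hreg.left x hx)]
    exact (hreg.left x hx).neg
  · intro x hx
    rw [rightLim_neg' (hreg.right x hx)]
    exact (hreg.right x hx).neg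

lemma hasDerivAlpha_neg {s t : ℝ} (hst : s < t) (hreg : RegOn h s t) {x D : ℝ}
    (hx : x ∈ Ioo s t) (hD : HasDerivAlpha h α x D) :
    HasDerivAlpha (fun y => -h y) α x (-D) := by
  have hmin : (0:ℝ) < min (x - s) (t - x) := by
    simp only [lt_min_iff]; constructor <;> [linarith [hx.1]; linarith [hx.2]]
  refine hD.neg.congr' ?_
  filter_upwards [Ioo_mem_nhdsGT hmin] with δ hδ
  have hδ1 : δ < x - s := lt_of_lt_of_le hδ.2 (min_le_left _ _)
  have hδ2 : δ < t - x := lt_of_lt_of_le hδ.2 (min_le_right _ _)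
  have hδ0 : (0:ℝ) < δ := hδ.1
  rw [leftLim_neg' (hreg.left (x + δ) ⟨by linarith, by linarith⟩),
    rightLim_neg' (hreg.right (x - δ) ⟨by linarith, by linarith⟩)]
  ring

lemma core_strict_neg (hst : s < t) (hreg : RegOn h s t) (hαreg : RegOn α s t)
    (hαs : StrictMonoOn α (Icc s t))
    (hd : ∀ x ∈ Ioo s t, ∃ D : ℝ, D < 0 ∧ HasDerivAlpha h α x D) :
    leftLim h t < rightLim h s := by
  have := core_strict hst hreg.neg hαreg hαs (fun x hx => by
    obtain ⟨D, hD, hDer⟩ := hd x hx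
    exact ⟨-D, by linarith, hasDerivAlpha_neg hst hreg hx hDer⟩)
  rw [rightLim_neg' (hreg.right s ⟨le_rfl, hst⟩), leftLim_neg' (hreg.left t ⟨hst, le_rfl⟩)] at this
  linarith

end strict


end S13

open S13 in
/-- Mean value inequality for quotients: if `D_α g` has constant sign on `(a,b)`,
then the difference quotient of `f` over `g` is bracketed by values of
`(D_α f)/(D_α g)`. -/
theorem stmt13 (a b : EReal) (hab : a < b) (f g α : ℝ → ℝ) (Df Dg : ℝ → ℝ)
    (hf : RegulatedOn' f a b) (hg : RegulatedOn' g a b)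
    (hα : StrictMonoOn α {x : ℝ | MemI a b x})
    (hDf : ∀ x : ℝ, MemI a b x → HasDerivAlpha f α x (Df x))
    (hDg : ∀ x : ℝ, MemI a b x → HasDerivAlpha g α x (Dg x))
    (hsign : (∀ x : ℝ, MemI a b x → 0 < Dg x) ∨ (∀ x : ℝ, MemI a b x → Dg x < 0))
    (s t : ℝ) (hs : MemI a b s) (ht : MemI a b t) (hst : s < t) :
    ∃ u ∈ Ioo s t, ∃ v ∈ Ioo s t,
      Df u / Dg u ≤ (leftLim f t - rightLim f s) / (leftLim g t - rightLim g s) ∧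
      (leftLim f t - rightLim f s) / (leftLim g t - rightLim g s) ≤ Df v / Dg v := by
  classical
  have hmem : ∀ x ∈ Icc s t, MemI a b x := fun x hx =>
    ⟨lt_of_lt_of_le hs.1 (EReal.coe_le_coe_iff.2 hx.1),
     lt_of_le_of_lt (EReal.coe_le_coe_iff.2 hx.2) ht.2⟩
  have hαs : StrictMonoOn α (Icc s t) := hα.mono (fun x hx => hmem x hx)
  have regf : RegOn f s t :=
    ⟨fun x hx => tendsto_leftLim_of_ex (hf x (hmem x ⟨hx.1.le, hx.2⟩)).1,
     fun x hx => tendsto_rightLim_of_ex (hf x (hmem x ⟨hx.1, hx.2.le⟩)).2⟩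
  have regg : RegOn g s t :=
    ⟨fun x hx => tendsto_leftLim_of_ex (hg x (hmem x ⟨hx.1.le, hx.2⟩)).1,
     fun x hx => tendsto_rightLim_of_ex (hg x (hmem x ⟨hx.1, hx.2.le⟩)).2⟩
  have regα : RegOn α s t := by
    constructor
    · intro x hx
      refine tendsto_leftLim_of_ex ⟨_, MonotoneOn.tendsto_nhdsWithin_Ioo_left (y := s)
        ⟨(s + x)/2, by constructor <;> linarith [hx.1]⟩
        (hαs.monotoneOn.mono (fun z hz => ⟨hz.1.le, hz.2.le.trans hx.2⟩)) ?_⟩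
      refine ⟨α x, ?_⟩
      rintro v ⟨z, hz, rfl⟩
      exact hαs.monotoneOn ⟨hz.1.le, hz.2.le.trans hx.2⟩ ⟨hx.1.le, hx.2⟩ hz.2.le
    · intro x hx
      refine tendsto_rightLim_of_ex ⟨_, MonotoneOn.tendsto_nhdsWithin_Ioo_right (y := t)
        ⟨(x + t)/2, by constructor <;> linarith [hx.2]⟩
        (hαs.monotoneOn.mono (fun z hz => ⟨hx.1.trans hz.1.le, hz.2.le⟩)) ?_⟩
      refine ⟨α x, ?_⟩
      rintro v ⟨z, hz, rfl⟩
      exact hαs.monotoneOn ⟨hx.1, hx.2.le⟩ ⟨hx.1.trans hz.1.le, hz.2.le⟩ hz.1.le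
  set Q := (leftLim f t - rightLim f s) / (leftLim g t - rightLim g s) with hQ
  set F : ℝ → ℝ := fun y => f y - Q * g y with hFdef
  have hLF : ∀ x ∈ Ioc s t, leftLim F x = leftLim f x - Q * leftLim g x := fun x hx =>
    leftLim_eq_of_tendsto
      ((regf.left x hx).sub ((regg.left x hx).const_mul Q))
  have hRF : ∀ x ∈ Ico s t, rightLim F x = rightLim f x - Q * rightLim g x := fun x hx =>
    rightLim_eq_of_tendsto
      ((regf.right x hx).sub ((regg.right x hx).const_mul Q))
  have regF : RegOn F s t := by
    constructor
    · intro x hx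
      rw [hLF x hx]
      exact (regf.left x hx).sub ((regg.left x hx).const_mul Q)
    · intro x hx
      rw [hRF x hx]
      exact (regf.right x hx).sub ((regg.right x hx).const_mul Q)
  have hDF : ∀ x ∈ Ioo s t, HasDerivAlpha F α x (Df x - Q * Dg x) := by
    intro x hx
    have hx' : MemI a b x := hmem x ⟨hx.1.le, hx.2.le⟩
    have hmin : (0:ℝ) < min (x - s) (t - x) := by
      simp only [lt_min_iff]; constructor <;> [linarith [hx.1]; linarith [hx.2]]
    refine ((hDf x hx').sub ((hDg x hx').const_mul Q)).congr' ?_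
    filter_upwards [Ioo_mem_nhdsGT hmin] with δ hδ
    have hδ1 : δ < x - s := lt_of_lt_of_le hδ.2 (min_le_left _ _)
    have hδ2 : δ < t - x := lt_of_lt_of_le hδ.2 (min_le_right _ _)
    have hδ0 : (0:ℝ) < δ := hδ.1
    rw [hLF (x + δ) ⟨by linarith, by linarith⟩, hRF (x - δ) ⟨by linarith, by linarith⟩]
    ring
  rcases hsign with hpos | hneg
  · -- Dg positive
    have hgd : ∀ x ∈ Ioo s t, ∃ D : ℝ, 0 < D ∧ HasDerivAlpha g α x D := fun x hx =>
      ⟨Dg x, hpos x (hmem x ⟨hx.1.le, hx.2.le⟩), hDg x (hmem x ⟨hx.1.le, hx.2.le⟩)⟩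
    have hden : 0 < leftLim g t - rightLim g s := by
      have := core_strict hst regg regα hαs hgd
      linarith
    have e : Q * (leftLim g t - rightLim g s) = leftLim f t - rightLim f s := by
      rw [hQ]; exact div_mul_cancel₀ _ hden.ne'
    have key : leftLim F t - rightLim F s = 0 := by
      rw [hLF t ⟨hst, le_rfl⟩, hRF s ⟨le_rfl, hst⟩]
      linear_combination -e
    have claim_u : ∃ u ∈ Ioo s t, Df u / Dg u ≤ Q := by
      by_contra hcon
      push_neg at hcon
      have hlt : rightLim F s < leftLim F t := by
        refine core_strict hst regF regα hαs ?_
        intro x hx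
        have hgx : 0 < Dg x := hpos x (hmem x ⟨hx.1.le, hx.2.le⟩)
        refine ⟨Df x - Q * Dg x, ?_, hDF x hx⟩
        have h2 : Q * Dg x < Df x := (lt_div_iff₀ hgx).1 (hcon x hx)
        linarith
      linarith
    have claim_v : ∃ v ∈ Ioo s t, Q ≤ Df v / Dg v := by
      by_contra hcon
      push_neg at hcon
      have hlt : leftLim F t < rightLim F s := by
        refine core_strict_neg hst regF regα hαs ?_
        intro x hx
        have hgx : 0 < Dg x := hpos x (hmem x ⟨hx.1.le, hx.2.le⟩)
        refine ⟨Df x - Q * Dg x, ?_, hDF x hx⟩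
        have h2 : Df x < Q * Dg x := (div_lt_iff₀ hgx).1 (hcon x hx)
        linarith
      linarith
    obtain ⟨u, hu, hu2⟩ := claim_u
    obtain ⟨v, hv, hv2⟩ := claim_v
    exact ⟨u, hu, v, hv, hu2, hv2⟩
  · -- Dg negative
    have hgd : ∀ x ∈ Ioo s t, ∃ D : ℝ, D < 0 ∧ HasDerivAlpha g α x D := fun x hx =>
      ⟨Dg x, hneg x (hmem x ⟨hx.1.le, hx.2.le⟩), hDg x (hmem x ⟨hx.1.le, hx.2.le⟩)⟩
    have hden : leftLim g t - rightLim g s < 0 := by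
      have := core_strict_neg hst regg regα hαs hgd
      linarith
    have e : Q * (leftLim g t - rightLim g s) = leftLim f t - rightLim f s := by
      rw [hQ]; exact div_mul_cancel₀ _ hden.ne
    have key : leftLim F t - rightLim F s = 0 := by
      rw [hLF t ⟨hst, le_rfl⟩, hRF s ⟨le_rfl, hst⟩]
      linear_combination -e
    have claim_u : ∃ u ∈ Ioo s t, Df u / Dg u ≤ Q := by
      by_contra hcon
      push_neg at hcon
      have hlt : leftLim F t < rightLim F s := by
        refine core_strict_neg hst regF regα hαs ?_
        intro x hx
        have hgx : Dg x < 0 := hneg x (hmem x ⟨hx.1.le, hx.2.le⟩)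
        refine ⟨Df x - Q * Dg x, ?_, hDF x hx⟩
        have h2 : Df x < Q * Dg x := (lt_div_iff_of_neg hgx).1 (hcon x hx)
        linarith
      linarith
    have claim_v : ∃ v ∈ Ioo s t, Q ≤ Df v / Dg v := by
      by_contra hcon
      push_neg at hcon
      have hlt : rightLim F s < leftLim F t := by
        refine core_strict hst regF regα hαs ?_
        intro x hx
        have hgx : Dg x < 0 := hneg x (hmem x ⟨hx.1.le, hx.2.le⟩)
        refine ⟨Df x - Q * Dg x, ?_, hDF x hx⟩
        have h2 : Q * Dg x < Df x := (div_lt_iff_of_neg hgx).1 (hcon x hx)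
        linarith
      linarith
    obtain ⟨u, hu, hu2⟩ := claim_u
    obtain ⟨v, hv, hv2⟩ := claim_v
    exact ⟨u, hu, v, hv, hu2, hv2⟩
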